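/- arXiv:1501.07000 — 6 statements merged into one kernel-verified Lean document; each statement's English description precedes it below -/
import Mathlib

section
/- Suppose: (i) μ : S → ℝ is continuous, c ∈ ℝ, the level set {s ∈ S : μ(s) = c} equals ∂A_c, and ∂A_c is nonempty; (ii) σ : S → ℝ is continuous and strictly positive; (iii) μ̂_n, n ∈ ℕ, are random fields on S and τ_n > 0 are positive reals with τ_n → 0 such that the random fields s ↦ (μ̂_n(s) − μ(s))/(τ_n σ(s)) converge in distribution in C(S,ℝ) to a centered Gaussian field G with unit variance; (iv) the cumulative distribution function of the real random variable sup_{s ∈ ∂A_c} |G(s)| is continuous. Then for every a ≥ 0, writing Â_{c,n}^± for the CoPE sets built from μ̂_n, τ_n, σ, c, a, one has lim_{n→∞} P[Â_{c,n}^+ ⊆ A_c ⊆ Â_{c,n}^−] = P[sup_{s ∈ ∂A_c} |G(s)| ≤ a]. -/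
open MeasureTheory Filter Topology ProbabilityTheory BoundedContinuousFunction

noncomputable section

/-- Borel measurable structure on the space of continuous functions. -/
instance contMapMeasurableSpace (α β : Type*) [TopologicalSpace α] [TopologicalSpace β] :
    MeasurableSpace C(α, β) := borel _

/-- The excursion set `A_c = {s : μ s ≥ c}`. -/
def excursionSet {α : Type*} (μ : α → ℝ) (c : ℝ) : Set α := {s | c ≤ μ s}

/-- The upper CoPE set `Â_c(+a)`. -/
def copePlus {α : Type*} (μhat σ : α → ℝ) (c τ a : ℝ) : Set α :=
  {s | a ≤ (μhat s - c) / (τ * σ s)}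

/-- The lower CoPE set `Â_c(-a)`. -/
def copeMinus {α : Type*} (μhat σ : α → ℝ) (c τ a : ℝ) : Set α :=
  {s | -a ≤ (μhat s - c) / (τ * σ s)}

/-- The standardized estimation error `s ↦ (μ̂(s) - μ(s)) / (τ σ(s))` as a continuous map. -/
def stdField {α : Type*} [TopologicalSpace α] (f μ σ : C(α, ℝ)) (τ : ℝ)
    (hσ : ∀ s, σ s ≠ 0) (hτ : τ ≠ 0) : C(α, ℝ) :=
  ⟨fun s => (f s - μ s) / (τ * σ s),
    ((map_continuous f).sub (map_continuous μ)).div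
      (continuous_const.mul (map_continuous σ)) fun s => mul_ne_zero hτ (hσ s)⟩

/-- `sup_{s ∈ B} |f s|`. -/
def supAbsOn {α : Type*} (f : α → ℝ) (B : Set α) : ℝ := sSup ((fun s => |f s|) '' B)

/-- A random field `G` (a random element of `C(α, ℝ)`) is a centered Gaussian field if every
finite linear combination of its values has a (possibly degenerate) centered Gaussian law. -/
def IsCenteredGaussianField {α Ω : Type*} [TopologicalSpace α] [MeasurableSpace Ω]
    (P : Measure Ω) (G : Ω → C(α, ℝ)) : Prop :=
  ∀ (K : ℕ) (pts : Fin K → α) (coef : Fin K → ℝ),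
    ∃ v : NNReal, Measure.map (fun ω => ∑ i, coef i * G ω (pts i)) P = gaussianReal 0 v

section helpers
variable {X : Type*} [TopologicalSpace X]

lemma le_supAbsOn (f : C(X,ℝ)) {K : Set X} (hK : IsCompact K) {s : X} (hs : s ∈ K) :
    |f s| ≤ supAbsOn (⇑f) K :=
  le_csSup (hK.image (map_continuous f).abs).bddAbove ⟨s, hs, rfl⟩

lemma supAbsOn_le {f : C(X,ℝ)} {K : Set X} (hne : K.Nonempty) {m : ℝ}
    (h : ∀ s ∈ K, |f s| ≤ m) : supAbsOn (⇑f) K ≤ m :=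
  csSup_le (hne.image _) (by rintro x ⟨s, hs, rfl⟩; exact h s hs)

lemma supAbsOn_lt {f : C(X,ℝ)} {K : Set X} (hK : IsCompact K) (hne : K.Nonempty) {m : ℝ}
    (h : ∀ s ∈ K, |f s| < m) : supAbsOn (⇑f) K < m := by
  obtain ⟨s, hs, hmax⟩ := hK.exists_isMaxOn hne (map_continuous f).abs.continuousOn
  exact lt_of_le_of_lt (supAbsOn_le hne fun t ht => hmax ht) (h s hs)

lemma supAbsOn_mono (f : C(X,ℝ)) {K K' : Set X} (h : K ⊆ K') (hK' : IsCompact K')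
    (hne : K.Nonempty) : supAbsOn (⇑f) K ≤ supAbsOn (⇑f) K' :=
  supAbsOn_le hne fun s hs => le_supAbsOn f hK' (h hs)

lemma continuous_supAbsOn [CompactSpace X] {K : Set X} (hK : IsCompact K) (hne : K.Nonempty) :
    Continuous (fun f : C(X,ℝ) => supAbsOn (⇑f) K) := by
  have key : ∀ f g : C(X,ℝ), supAbsOn (⇑f) K ≤ supAbsOn (⇑g) K + dist f g := by
    intro f g
    refine supAbsOn_le hne fun s hs => ?_
    calc |f s| ≤ |g s| + |f s - g s| := by
          have := abs_sub_abs_le_abs_sub (f s) (g s); linarith [abs_nonneg (f s - g s)]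
      _ ≤ supAbsOn (⇑g) K + dist f g := by
          have h1 : |f s - g s| = dist (f s) (g s) := (Real.dist_eq _ _).symm
          have h2 := ContinuousMap.dist_apply_le_dist (f := f) (g := g) s
          have h3 := le_supAbsOn g hK hs
          rw [h1]; linarith
  have : LipschitzWith 1 (fun f : C(X,ℝ) => supAbsOn (⇑f) K) := by
    apply LipschitzWith.of_dist_le_mul
    intro f g
    rw [Real.dist_eq, NNReal.coe_one, one_mul, abs_sub_le_iff]
    constructor
    · linarith [key f g, dist_comm f g]
    · linarith [key g f, dist_comm f g]
  exact this.continuous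

variable (μ σ f : C(X, ℝ)) (c τ a : ℝ) (hτ : 0 < τ) (hσ : ∀ s, 0 < σ s)

/-- Deterministic upper inclusion: the coverage event forces `|F| ≤ a` on the boundary. -/
lemma boundary_bound
    (hlevel : {s : X | μ s = c} = frontier (excursionSet (⇑μ) c))
    (h1 : copePlus (⇑f) (⇑σ) c τ a ⊆ excursionSet (⇑μ) c)
    (h2 : excursionSet (⇑μ) c ⊆ copeMinus (⇑f) (⇑σ) c τ a) :
    ∀ s ∈ frontier (excursionSet (⇑μ) c),
      |stdField f μ σ τ (fun s => (hσ s).ne') hτ.ne' s| ≤ a := by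
  intro s hs
  have hμs : μ s = c := by rw [← hlevel] at hs; exact hs
  rw [abs_le]
  constructor
  · have hsA : s ∈ excursionSet (⇑μ) c := by simp only [excursionSet, Set.mem_setOf_eq, hμs.ge]
    have := h2 hsA
    simpa [stdField, copeMinus, hμs] using this
  · have hq : Continuous fun t => (f t - c) / (τ * σ t) :=
      ((map_continuous f).sub continuous_const).div
        (continuous_const.mul (map_continuous σ)) fun t => mul_ne_zero hτ.ne' (hσ t).ne'
    have hclosed : IsClosed {t | (f t - c) / (τ * σ t) ≤ a} := isClosed_le hq continuous_const
    have hsub : {t | μ t < c} ⊆ {t | (f t - c) / (τ * σ t) ≤ a} := by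
      intro t ht
      by_contra hc'
      simp only [Set.mem_setOf_eq, not_le] at hc'
      have : t ∈ copePlus (⇑f) (⇑σ) c τ a := by
        simp only [copePlus, Set.mem_setOf_eq]; exact le_of_lt hc'
      exact absurd (h1 this) (by simpa [excursionSet, not_le] using ht)
    have hscl : s ∈ closure {t | μ t < c} := by
      have h' : s ∈ closure (excursionSet (⇑μ) c)ᶜ := by
        rw [frontier_eq_closure_inter_closure] at hs
        exact hs.2
      have : (excursionSet (⇑μ) c)ᶜ = {t | μ t < c} := by
        ext t; simp [excursionSet, not_le]
      rwa [this] at h'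
    have := closure_minimal hsub hclosed hscl
    simpa [stdField, hμs] using this

/-- Deterministic lower inclusion. -/
lemma cope_inclusions (δ R : ℝ) (hσR : ∀ s, σ s ≤ R) (hR : 0 < R) (hδ : 0 < δ)
    (h1 : ∀ s, |μ s - c| ≤ δ → |stdField f μ σ τ (fun s => (hσ s).ne') hτ.ne' s| ≤ a)
    (h2 : ∀ s, |stdField f μ σ τ (fun s => (hσ s).ne') hτ.ne' s| ≤ a + δ / (τ * R)) :
    copePlus (⇑f) (⇑σ) c τ a ⊆ excursionSet (⇑μ) c ∧
      excursionSet (⇑μ) c ⊆ copeMinus (⇑f) (⇑σ) c τ a := by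
  have hds : ∀ s : X, 0 < τ * σ s := fun s => mul_pos hτ (hσ s)
  have key : ∀ s : X, (f s - c) / (τ * σ s)
      = (f s - μ s) / (τ * σ s) + (μ s - c) / (τ * σ s) := by
    intro s
    rw [← add_div]; ring_nf
  have hdle : ∀ s : X, δ / (τ * R) ≤ δ / (τ * σ s) := fun s =>
    div_le_div_of_nonneg_left hδ.le (hds s) (mul_le_mul_of_nonneg_left (hσR s) hτ.le)
  constructor
  · intro s hs
    simp only [copePlus, Set.mem_setOf_eq] at hs
    simp only [excursionSet, Set.mem_setOf_eq]
    by_contra hns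
    push_neg at hns
    have hFs := key s
    rcases le_or_gt (c - μ s) δ with hcase | hcase
    · have hF : (f s - μ s) / (τ * σ s) ≤ a := by
        have := h1 s (by rw [abs_sub_comm, abs_of_nonneg (by linarith)]; exact hcase)
        have := abs_le.mp this
        simpa [stdField] using this.2
      have hneg : (μ s - c) / (τ * σ s) < 0 :=
        div_neg_of_neg_of_pos (by linarith) (hds s)
      linarith
    · have hF : (f s - μ s) / (τ * σ s) ≤ a + δ / (τ * R) := by
        have := abs_le.mp (h2 s)
        simpa [stdField] using this.2
      have hlt : (μ s - c) / (τ * σ s) < -(δ / (τ * σ s)) := by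
        rw [← neg_div]
        exact (div_lt_div_iff_of_pos_right (hds s)).mpr (by linarith)
      have := hdle s
      linarith
  · intro s hs
    simp only [excursionSet, Set.mem_setOf_eq] at hs
    simp only [copeMinus, Set.mem_setOf_eq]
    have hFs := key s
    rcases le_or_gt (μ s - c) δ with hcase | hcase
    · have hF : -a ≤ (f s - μ s) / (τ * σ s) := by
        have := abs_le.mp (h1 s (by rw [abs_of_nonneg (by linarith)]; exact hcase))
        simpa [stdField] using this.1
      have hpos : 0 ≤ (μ s - c) / (τ * σ s) := div_nonneg (by linarith) (hds s).le
      linarith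
    · have hF : -(a + δ / (τ * R)) ≤ (f s - μ s) / (τ * σ s) := by
        have := abs_le.mp (h2 s)
        simpa [stdField] using this.1
      have hgt : δ / (τ * σ s) < (μ s - c) / (τ * σ s) :=
        (div_lt_div_iff_of_pos_right (hds s)).mpr (by linarith)
      have := hdle s
      linarith

end helpers

/-- **Theorem 1 (CoPE sets coverage).** -/
theorem cope_coverage
    {N : ℕ} (hN : 1 ≤ N) (S : Set (EuclideanSpace ℝ (Fin N))) (hS : IsCompact S)
    (μ σ : C(S, ℝ)) (c : ℝ)
    (hlevel : {s : S | μ s = c} = frontier (excursionSet (⇑μ) c))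
    (hne : (frontier (excursionSet (⇑μ) c)).Nonempty)
    (hσ : ∀ s, 0 < σ s)
    {Ω : Type*} [MeasurableSpace Ω] (P : Measure Ω) [IsProbabilityMeasure P]
    {Ω' : Type*} [MeasurableSpace Ω'] (P' : Measure Ω') [IsProbabilityMeasure P']
    (μhat : ℕ → Ω → C(S, ℝ)) (hmeas : ∀ n, Measurable (μhat n))
    (τ : ℕ → ℝ) (hτ : ∀ n, 0 < τ n) (hτ0 : Tendsto τ atTop (𝓝 0))
    (G : Ω' → C(S, ℝ)) (hGmeas : Measurable G)
    (hG : IsCenteredGaussianField P' G)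
    (hGvar : ∀ s : S, ∫ ω, (G ω s) ^ 2 ∂P' = 1)
    (hconv : ∀ φ : C(S, ℝ) →ᵇ ℝ,
      Tendsto
        (fun n => ∫ ω, φ (stdField (μhat n ω) μ σ (τ n) (fun s => (hσ s).ne') (hτ n).ne') ∂P)
        atTop (𝓝 (∫ ω, φ (G ω) ∂P')))
    (hcdf : Continuous fun a : ℝ =>
      (P' {ω | supAbsOn (⇑(G ω)) (frontier (excursionSet (⇑μ) c)) ≤ a}).toReal) :
    ∀ a : ℝ, 0 ≤ a →
      Tendsto
        (fun n =>
          (P {ω | copePlus (⇑(μhat n ω)) (⇑σ) c (τ n) a ⊆ excursionSet (⇑μ) c ∧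
              excursionSet (⇑μ) c ⊆ copeMinus (⇑(μhat n ω)) (⇑σ) c (τ n) a}).toReal)
        atTop
        (𝓝 ((P' {ω | supAbsOn (⇑(G ω)) (frontier (excursionSet (⇑μ) c)) ≤ a}).toReal)) := by
  intro a ha
  classical
  haveI : CompactSpace ↥S := isCompact_iff_compactSpace.mp hS
  obtain ⟨s₀, hs₀⟩ := hne
  haveI : Nonempty ↥S := ⟨s₀⟩
  haveI hBorel : BorelSpace C(↥S, ℝ) := ⟨rfl⟩
  set B : Set ↥S := frontier (excursionSet (⇑μ) c) with hBdef
  have hμs₀ : μ s₀ = c := by rw [← hlevel] at hs₀; exact hs₀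
  have hBclosed : IsClosed B := isClosed_frontier
  have hBcompact : IsCompact B := hBclosed.isCompact
  have hBne : B.Nonempty := ⟨s₀, hs₀⟩
  -- bound on σ
  obtain ⟨smax, -, hsmax⟩ :=
    isCompact_univ.exists_isMaxOn Set.univ_nonempty (map_continuous σ).continuousOn
  set R : ℝ := σ smax with hRdef
  have hR : 0 < R := hσ smax
  have hσR : ∀ s, σ s ≤ R := fun s => hsmax (Set.mem_univ s)
  -- the standardized random fields
  set F : ℕ → Ω → C(↥S, ℝ) := fun n ω =>
    stdField (μhat n ω) μ σ (τ n) (fun s => (hσ s).ne') (hτ n).ne' with hFdef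
  have hPsi : ∀ n, Continuous fun f : C(↥S, ℝ) =>
      stdField f μ σ (τ n) (fun s => (hσ s).ne') (hτ n).ne' := by
    intro n
    have hinv : Continuous fun s : ↥S => (τ n * σ s)⁻¹ :=
      (continuous_const.mul (map_continuous σ)).inv₀
        fun s => mul_ne_zero (hτ n).ne' (hσ s).ne'
    have heq : (fun f : C(↥S, ℝ) =>
        stdField f μ σ (τ n) (fun s => (hσ s).ne') (hτ n).ne')
        = fun f : C(↥S, ℝ) => (f - μ) * ⟨fun s => (τ n * σ s)⁻¹, hinv⟩ := by
      funext f
      ext s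
      simp [stdField, div_eq_mul_inv]
    rw [heq]
    exact (continuous_id.sub continuous_const).mul continuous_const
  have hFmeas : ∀ n, Measurable (F n) := fun n => ((hPsi n).measurable).comp (hmeas n)
  -- pushforward measures
  set ν : ℕ → ProbabilityMeasure C(↥S, ℝ) := fun n =>
    ⟨P.map (F n), Measure.isProbabilityMeasure_map (hFmeas n).aemeasurable⟩ with hνdef
  set νG : ProbabilityMeasure C(↥S, ℝ) :=
    ⟨P'.map G, Measure.isProbabilityMeasure_map hGmeas.aemeasurable⟩ with hνGdef
  have hνapp : ∀ n (E : Set C(↥S, ℝ)), MeasurableSet E →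
      (ν n : Measure C(↥S, ℝ)) E = P (F n ⁻¹' E) := fun n E hE =>
    Measure.map_apply (hFmeas n) hE
  have hνGapp : ∀ E : Set C(↥S, ℝ), MeasurableSet E →
      (νG : Measure C(↥S, ℝ)) E = P' (G ⁻¹' E) := fun E hE =>
    Measure.map_apply hGmeas hE
  -- weak convergence
  have hweak : Tendsto ν atTop (𝓝 νG) := by
    rw [ProbabilityMeasure.tendsto_iff_forall_integral_tendsto]
    intro φ
    have h1 : ∀ n, ∫ x, φ x ∂(ν n : Measure C(↥S, ℝ)) = ∫ ω, φ (F n ω) ∂P := fun n =>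
      integral_map (hFmeas n).aemeasurable φ.continuous.aestronglyMeasurable
    have h2 : ∫ x, φ x ∂(νG : Measure C(↥S, ℝ)) = ∫ ω, φ (G ω) ∂P' :=
      integral_map hGmeas.aemeasurable φ.continuous.aestronglyMeasurable
    simp only [h1, h2]
    exact hconv φ
  have hclosed_lim : ∀ Fs : Set C(↥S, ℝ), IsClosed Fs →
      limsup (fun n => (ν n : Measure C(↥S, ℝ)) Fs) atTop ≤ (νG : Measure C(↥S, ℝ)) Fs :=
    fun Fs h => ProbabilityMeasure.limsup_measure_closed_le_of_tendsto hweak h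
  have hopen_lim : ∀ Os : Set C(↥S, ℝ), IsOpen Os →
      (νG : Measure C(↥S, ℝ)) Os ≤ liminf (fun n => (ν n : Measure C(↥S, ℝ)) Os) atTop :=
    fun Os h => ProbabilityMeasure.le_liminf_measure_open_of_tendsto hweak h
  -- sets in C(S, ℝ)
  set Cset : Set C(↥S, ℝ) := {h | supAbsOn (⇑h) B ≤ a} with hCsetdef
  have hTB : Continuous fun h : C(↥S, ℝ) => supAbsOn (⇑h) B :=
    continuous_supAbsOn hBcompact hBne
  have hCclosed : IsClosed Cset := isClosed_le hTB continuous_const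
  set Sd : ℝ → Set ↥S := fun δ => {s | |μ s - c| ≤ δ} with hSddef
  have hSdcl : ∀ δ : ℝ, IsClosed (Sd δ) :=
    fun δ => isClosed_le ((map_continuous μ).sub continuous_const).abs continuous_const
  have hSdcompact : ∀ δ : ℝ, IsCompact (Sd δ) := fun δ => (hSdcl δ).isCompact
  have hBSd : ∀ δ : ℝ, 0 ≤ δ → B ⊆ Sd δ := by
    intro δ hδ s hs
    have : μ s = c := by rw [← hlevel] at hs; exact hs
    simp [hSddef, this, hδ]
  have hSdne : ∀ δ : ℝ, 0 ≤ δ → (Sd δ).Nonempty := fun δ hδ => ⟨s₀, hBSd δ hδ hs₀⟩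
  set O : ℝ → Set C(↥S, ℝ) := fun δ => {h | supAbsOn (⇑h) (Sd δ) < a} with hOdef
  have hOopen : ∀ δ : ℝ, 0 ≤ δ → IsOpen (O δ) := fun δ hδ =>
    isOpen_lt (continuous_supAbsOn (hSdcompact δ) (hSdne δ hδ)) continuous_const
  set CM : ℕ → Set C(↥S, ℝ) := fun k => {h | (k : ℝ) ≤ supAbsOn (⇑h) Set.univ} with hCMdef
  have hCMclosed : ∀ k, IsClosed (CM k) := fun k =>
    isClosed_le continuous_const (continuous_supAbsOn isCompact_univ Set.univ_nonempty)
  -- the coverage events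
  set E : ℕ → Set Ω := fun n =>
    {ω | copePlus (⇑(μhat n ω)) (⇑σ) c (τ n) a ⊆ excursionSet (⇑μ) c ∧
      excursionSet (⇑μ) c ⊆ copeMinus (⇑(μhat n ω)) (⇑σ) c (τ n) a} with hEdef
  -- upper sandwich
  have hub : ∀ n, P (E n) ≤ (ν n : Measure C(↥S, ℝ)) Cset := by
    intro n
    rw [hνapp n Cset hCclosed.measurableSet]
    refine measure_mono fun ω hω => ?_
    have hbd := boundary_bound μ σ (μhat n ω) c (τ n) a (hτ n) hσ hlevel hω.1 hω.2
    exact supAbsOn_le hBne fun s hs => hbd s hs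
  -- limsup bound
  have hlimsup : limsup (fun n => P (E n)) atTop ≤ (νG : Measure C(↥S, ℝ)) Cset :=
    le_trans (limsup_le_limsup (Eventually.of_forall hub)) (hclosed_lim Cset hCclosed)
  -- P'(sup < a) = P'(sup ≤ a) using continuity of the cdf
  have hltle : P' {ω | supAbsOn (⇑(G ω)) B < a} = P' {ω | supAbsOn (⇑(G ω)) B ≤ a} := by
    have hmono : Monotone fun m : ℕ => {ω | supAbsOn (⇑(G ω)) B ≤ a - 1 / (m + 1)} := by
      intro m m' hmm' ω hω
      simp only [Set.mem_setOf_eq] at hω ⊢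
      have h1 : (1 : ℝ) / (m' + 1) ≤ 1 / (m + 1) := by
        apply one_div_le_one_div_of_le
        · positivity
        · have : (m : ℝ) ≤ (m' : ℝ) := by exact_mod_cast hmm'
          linarith
      linarith
    have hunion : (⋃ m : ℕ, {ω | supAbsOn (⇑(G ω)) B ≤ a - 1 / (m + 1)})
        = {ω | supAbsOn (⇑(G ω)) B < a} := by
      ext ω
      simp only [Set.mem_iUnion, Set.mem_setOf_eq]
      constructor
      · rintro ⟨m, hm⟩
        have : (0 : ℝ) < 1 / (m + 1) := by positivity
        linarith
      · intro hω
        obtain ⟨m, hm⟩ := exists_nat_one_div_lt (sub_pos.mpr hω)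
        exact ⟨m, by linarith⟩
    have htend := tendsto_measure_iUnion_atTop (μ := P')
      (s := fun m : ℕ => {ω | supAbsOn (⇑(G ω)) B ≤ a - 1 / (m + 1)}) hmono
    rw [hunion] at htend
    -- convert via toReal and cdf continuity
    have harg : Tendsto (fun m : ℕ => a - 1 / ((m : ℝ) + 1)) atTop (𝓝 a) := by
      have : Tendsto (fun m : ℕ => 1 / ((m : ℝ) + 1)) atTop (𝓝 0) :=
        tendsto_one_div_add_atTop_nhds_zero_nat
      simpa using tendsto_const_nhds.sub this
    have hcdftend : Tendsto (fun m : ℕ =>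
        (P' {ω | supAbsOn (⇑(G ω)) B ≤ a - 1 / (m + 1)}).toReal) atTop
        (𝓝 ((P' {ω | supAbsOn (⇑(G ω)) B ≤ a}).toReal)) := by
      exact (hcdf.tendsto a).comp harg
    have htendReal : Tendsto (fun m : ℕ =>
        (P' {ω | supAbsOn (⇑(G ω)) B ≤ a - 1 / (m + 1)}).toReal) atTop
        (𝓝 ((P' {ω | supAbsOn (⇑(G ω)) B < a}).toReal)) := by
      exact (ENNReal.tendsto_toReal (measure_ne_top P' _)).comp htend
    have := tendsto_nhds_unique htendReal hcdftend
    exact (ENNReal.toReal_eq_toReal_iff' (measure_ne_top P' _) (measure_ne_top P' _)).mp this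
  -- liminf bound
  have hliminf : (νG : Measure C(↥S, ℝ)) Cset ≤ liminf (fun n => P (E n)) atTop := by
    by_contra hcon
    push_neg at hcon
    obtain ⟨b, hb1, hb2⟩ := exists_between hcon
    -- νG Cset = νG {h | sup < a}
    have hOB : (νG : Measure C(↥S, ℝ)) {h : C(↥S, ℝ) | supAbsOn (⇑h) B < a}
        = (νG : Measure C(↥S, ℝ)) Cset := by
      have hmO : MeasurableSet {h : C(↥S, ℝ) | supAbsOn (⇑h) B < a} :=
        (isOpen_lt hTB continuous_const).measurableSet
      rw [hνGapp _ hmO, hνGapp _ hCclosed.measurableSet]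
      exact hltle
    rw [← hOB] at hb2
    -- choose δ = 1/(m+1) with b < νG (O δ)
    have hOmono : Monotone fun m : ℕ => O (1 / ((m : ℝ) + 1)) := by
      intro m m' hmm' h hh
      have hh' : supAbsOn (⇑h) (Sd (1 / ((m : ℝ) + 1))) < a := hh
      have hsub : Sd (1 / ((m' : ℝ) + 1)) ⊆ Sd (1 / ((m : ℝ) + 1)) := by
        intro s hs
        have hs' : |μ s - c| ≤ 1 / ((m' : ℝ) + 1) := hs
        have h1 : (1 : ℝ) / (m' + 1) ≤ 1 / (m + 1) := by
          apply one_div_le_one_div_of_le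
          · positivity
          · have : (m : ℝ) ≤ (m' : ℝ) := by exact_mod_cast hmm'
            linarith
        show |μ s - c| ≤ 1 / ((m : ℝ) + 1)
        linarith
      show supAbsOn (⇑h) (Sd (1 / ((m' : ℝ) + 1))) < a
      exact lt_of_le_of_lt
        (supAbsOn_mono h hsub (hSdcompact _) (hSdne _ (by positivity))) hh' 
    have hOunion : (⋃ m : ℕ, O (1 / ((m : ℝ) + 1))) = {h : C(↥S, ℝ) | supAbsOn (⇑h) B < a} := by
      apply Set.Subset.antisymm
      · intro h hh
        obtain ⟨m, hm⟩ := Set.mem_iUnion.mp hh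
        have hm' : supAbsOn (⇑h) (Sd (1 / ((m : ℝ) + 1))) < a := hm
        show supAbsOn (⇑h) B < a
        exact lt_of_le_of_lt
          (supAbsOn_mono h (hBSd _ (by positivity)) (hSdcompact _) hBne) hm' 
      · intro h hh
        simp only [Set.mem_setOf_eq] at hh
        -- compactness: find m such that sup over Sd (1/(m+1)) < a
        set K : Set ↥S := {s | a ≤ |h s|} with hKdef
        have hKclosed : IsClosed K :=
          isClosed_le continuous_const (map_continuous h).abs
        have hKB : ∀ s ∈ K, μ s ≠ c := by
          intro s hs hc
          have hsB : s ∈ B := by rw [← hlevel]; exact hc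
          have h1 : a ≤ |h s| := hs
          have h2 : |h s| ≤ supAbsOn (⇑h) B := le_supAbsOn h hBcompact hsB
          linarith
        by_cases hK : K.Nonempty
        · obtain ⟨t, ht, htmin⟩ := hKclosed.isCompact.exists_isMinOn hK
            ((map_continuous μ).sub continuous_const).abs.continuousOn
          have hδ0 : 0 < |μ t - c| := abs_pos.mpr (sub_ne_zero.mpr (hKB t ht))
          obtain ⟨m, hm⟩ := exists_nat_one_div_lt hδ0
          refine Set.mem_iUnion.mpr ⟨m, ?_⟩
          have : ∀ s ∈ Sd (1 / ((m : ℝ) + 1)), |h s| < a := by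
            intro s hs
            by_contra hc
            push_neg at hc
            have hsK : s ∈ K := hc
            have := htmin hsK
            have hle : |μ s - c| ≤ 1 / ((m : ℝ) + 1) := hs
            simp only [Set.mem_setOf_eq] at this
            have : |μ t - c| ≤ 1 / ((m : ℝ) + 1) := le_trans this hle
            have : ((m : ℝ) + 1) = ((m : ℝ) + 1) := rfl
            linarith [hm]
          exact supAbsOn_lt (hSdcompact _) (hSdne _ (by positivity)) this
        · refine Set.mem_iUnion.mpr ⟨0, ?_⟩
          refine supAbsOn_lt (hSdcompact _) (hSdne _ (by positivity)) ?_
          intro s _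
          by_contra hc
          push_neg at hc
          exact hK ⟨s, hc⟩
    have htendO := tendsto_measure_iUnion_atTop (μ := (νG : Measure C(↥S, ℝ)))
      (s := fun m : ℕ => O (1 / ((m : ℝ) + 1))) hOmono
    rw [hOunion] at htendO
    have htendO' : Tendsto (fun m : ℕ => (νG : Measure C(↥S, ℝ)) (O (1 / ((m : ℝ) + 1))))
        atTop (𝓝 ((νG : Measure C(↥S, ℝ)) {h : C(↥S, ℝ) | supAbsOn (⇑h) B < a})) := htendO
    have hev : ∀ᶠ m : ℕ in atTop, b < (νG : Measure C(↥S, ℝ)) (O (1 / ((m : ℝ) + 1))) :=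
      htendO'.eventually_const_lt hb2
    obtain ⟨m, hm⟩ := hev.exists
    have hδ0 : (0:ℝ) < 1 / ((m : ℝ) + 1) := by positivity
    set δ : ℝ := 1 / ((m : ℝ) + 1) with hδdef
    have hδ : 0 < δ := hδ0
    -- pick w strictly between b and νG (O δ) and set ε := w - b
    obtain ⟨w, hbw, hwO⟩ := exists_between hm
    set ε := w - b with hεdef
    have hε : 0 < ε := tsub_pos_of_lt hbw
    have hwtop : w ≠ ⊤ := ne_top_of_lt hwO
    have hbε : b + ε = w := by
      rw [hεdef, add_comm]
      exact tsub_add_cancel_of_le hbw.le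
    have hεtop : ε ≠ ⊤ := by
      rw [hεdef]
      exact ne_top_of_le_ne_top hwtop tsub_le_self
    -- choose k with νG (CM k) < ε and 1 ≤ k
    have hCManti : Antitone CM := by
      intro k k' hkk' h hh
      have : ((k : ℝ)) ≤ (k' : ℝ) := by exact_mod_cast hkk'
      exact le_trans this hh
    have hCMiInter : (⋂ k, CM k) = ∅ := by
      ext h
      simp only [Set.mem_iInter, Set.mem_empty_iff_false, iff_false, not_forall]
      obtain ⟨k, hk⟩ := exists_nat_gt (supAbsOn (⇑h) Set.univ)
      exact ⟨k, by simp only [hCMdef, Set.mem_setOf_eq, not_le]; exact hk⟩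
    have htendCM := tendsto_measure_iInter_atTop (μ := (νG : Measure C(↥S, ℝ)))
      (fun k => ((hCMclosed k).measurableSet).nullMeasurableSet) hCManti
      ⟨0, measure_ne_top _ _⟩
    rw [hCMiInter, measure_empty] at htendCM
    have hevCM : ∀ᶠ k : ℕ in atTop, (νG : Measure C(↥S, ℝ)) (CM k) < ε :=
      htendCM.eventually_lt_const hε
    obtain ⟨k, hk2, hk1⟩ := (hevCM.and (eventually_ge_atTop 1)).exists
    have hkpos : (0 : ℝ) < (k : ℝ) := by exact_mod_cast hk1
    -- portmanteau eventualities
    have e1 : ∀ᶠ n in atTop, w < (ν n : Measure C(↥S, ℝ)) (O δ) :=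
      eventually_lt_of_lt_liminf (lt_of_lt_of_le hwO (hopen_lim _ (hOopen δ hδ.le)))
    have e2 : ∀ᶠ n in atTop, (ν n : Measure C(↥S, ℝ)) (CM k) < ε :=
      eventually_lt_of_limsup_lt (lt_of_le_of_lt (hclosed_lim _ (hCMclosed k)) hk2)
    have e3 : ∀ᶠ n in atTop, (k : ℝ) ≤ a + δ / (τ n * R) := by
      have hpos : (0 : ℝ) < δ / (R * k) := by positivity
      filter_upwards [hτ0.eventually_lt_const hpos] with n hn
      have h1 : τ n * (R * k) < δ := (lt_div_iff₀ (by positivity)).mp hn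
      have h2 : (k : ℝ) < δ / (τ n * R) := by
        rw [lt_div_iff₀ (mul_pos (hτ n) hR)]
        nlinarith
      linarith
    have hfinal : ∀ᶠ n in atTop, b < P (E n) := by
      filter_upwards [e1, e2, e3] with n h1 h2 h3
      have hsub : F n ⁻¹' O δ ∩ (F n ⁻¹' CM k)ᶜ ⊆ E n := by
        rintro ω ⟨hω1, hω2⟩
        have hωO : supAbsOn (⇑(F n ω)) (Sd δ) < a := hω1
        have hωCM : supAbsOn (⇑(F n ω)) Set.univ < (k : ℝ) := by
          have : ¬ ((k : ℝ) ≤ supAbsOn (⇑(F n ω)) Set.univ) := hω2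
          exact not_le.mp this
        refine cope_inclusions μ σ (μhat n ω) c (τ n) a (hτ n) hσ δ R hσR hR hδ ?_ ?_
        · intro s hs
          exact le_of_lt (lt_of_le_of_lt (le_supAbsOn (F n ω) (hSdcompact δ) hs) hωO)
        · intro s
          have := lt_of_le_of_lt (le_supAbsOn (F n ω) isCompact_univ (Set.mem_univ s)) hωCM
          linarith
      have hm1 : (ν n : Measure C(↥S, ℝ)) (O δ)
          ≤ P (E n) + (ν n : Measure C(↥S, ℝ)) (CM k) := by
        rw [hνapp n _ (hOopen δ hδ.le).measurableSet, hνapp n _ (hCMclosed k).measurableSet]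
        calc P (F n ⁻¹' O δ)
            ≤ P ((F n ⁻¹' O δ ∩ (F n ⁻¹' CM k)ᶜ) ∪ F n ⁻¹' CM k) := by
              apply measure_mono
              intro ω hω
              by_cases hc : ω ∈ F n ⁻¹' CM k
              · exact Or.inr hc
              · exact Or.inl ⟨hω, hc⟩
          _ ≤ P (F n ⁻¹' O δ ∩ (F n ⁻¹' CM k)ᶜ) + P (F n ⁻¹' CM k) := measure_union_le _ _
          _ ≤ P (E n) + P (F n ⁻¹' CM k) := add_le_add_left (measure_mono hsub) _
      have hchain : b + ε < P (E n) + ε := by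
        calc b + ε = w := hbε
          _ < (ν n : Measure C(↥S, ℝ)) (O δ) := h1
          _ ≤ P (E n) + (ν n : Measure C(↥S, ℝ)) (CM k) := hm1
          _ ≤ P (E n) + ε := add_le_add_right h2.le _
      exact (ENNReal.add_lt_add_iff_right hεtop).mp hchain
    have : b ≤ liminf (fun n => P (E n)) atTop :=
      le_liminf_of_le (by isBoundedDefault) (hfinal.mono fun n hn => hn.le)
    exact absurd this (not_le.mpr hb1)
  -- conclusion
  have hxtend : Tendsto (fun n => P (E n)) atTop (𝓝 ((νG : Measure C(↥S, ℝ)) Cset)) :=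
    tendsto_of_le_liminf_of_limsup_le hliminf hlimsup
  have hGC : (νG : Measure C(↥S, ℝ)) Cset = P' {ω | supAbsOn (⇑(G ω)) B ≤ a} := by
    rw [hνGapp Cset hCclosed.measurableSet]
    rfl
  have hfin := (ENNReal.tendsto_toReal
    (by rw [hGC]; exact measure_ne_top P' _)).comp hxtend
  rw [hGC] at hfin
  exact hfin

end
end

section
/- Suppose: (i) μ : S → ℝ is continuous, c ∈ ℝ, the level set {s ∈ S : μ(s) = c} equals ∂A_c, and ∂A_c is nonempty; (ii) σ : S → ℝ is continuous and strictly positive; (iii) μ̂_n, n ∈ ℕ, are random fields on S and τ_n > 0 are positive reals with τ_n → 0 such that the random fields s ↦ (μ̂_n(s) − μ(s))/(τ_n σ(s)) converge in distribution in C(S,ℝ) to a centered Gaussian field G with unit variance; (iv) the cumulative distribution function of sup_{s ∈ ∂A_c} |G(s)| is continuous. Then for every a > 0, writing Â_{c,n}^± for the CoPE sets built from μ̂_n, τ_n, σ, c, a, one has lim_{n→∞} P[∂A_c ⊆ cl(Â_{c,n}^− \ Â_{c,n}^+)] = P[sup_{s ∈ ∂A_c} |G(s)| ≤ a], where cl denotes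 the topological closure in S. -/
/-! On `∂A_c` we have `μ = c`, so there the CoPE statistic `(μ̂_n - c) / (τ_n σ)` is the
standardized error field `Z_n = (μ̂_n - μ) / (τ_n σ)`. Hence the coverage event is squeezed between
`{sup_{∂A_c} |Z_n| < a}` and `{sup_{∂A_c} |Z_n| ≤ a}`, the upper inclusion because
`|(μ̂_n - c) / (τ_n σ)| ≤ a` is a closed condition. The functional `f ↦ sup_{∂A_c} |f|` is
1-Lipschitz on `C(S, ℝ)`, so by the continuous mapping theorem `sup_{∂A_c} |Z_n|` converges in
distribution to `sup_{∂A_c} |G|`. Continuity of the latter's distribution function rules out an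
atom at `a`, and the portmanteau theorem gives the same limit for both bounds. -/

open MeasureTheory Filter Topology ProbabilityTheory BoundedContinuousFunction

noncomputable section

section SupAbsOn

variable {α : Type*}

lemma supAbsOn_nonneg (f : α → ℝ) (B : Set α) : 0 ≤ supAbsOn f B :=
  Real.sSup_nonneg (by rintro _ ⟨s, -, rfl⟩; exact abs_nonneg _)

lemma supAbsOn_le_s1 {f : α → ℝ} {B : Set α} {b : ℝ} (hb : 0 ≤ b) (h : ∀ s ∈ B, |f s| ≤ b) :
    supAbsOn f B ≤ b :=
  Real.sSup_le (by rintro _ ⟨s, hs, rfl⟩; exact h s hs) hb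

variable [TopologicalSpace α] [CompactSpace α]

lemma abs_le_supAbsOn (f : C(α, ℝ)) {B : Set α} {s : α} (hs : s ∈ B) : |f s| ≤ supAbsOn f B :=
  le_csSup ((isCompact_range (map_continuous f).abs).bddAbove.mono (Set.image_subset_range _ _))
    ⟨s, hs, rfl⟩

lemma lipschitzWith_supAbsOn (B : Set α) : LipschitzWith 1 fun f : C(α, ℝ) => supAbsOn f B :=
  LipschitzWith.of_le_add fun f g =>
    supAbsOn_le_s1 (add_nonneg (supAbsOn_nonneg _ _) dist_nonneg) fun s hs => by
      have hfg : |f s - g s| ≤ dist f g := by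
        rw [← Real.dist_eq]; exact ContinuousMap.dist_apply_le_dist s
      linarith [abs_sub_abs_le_abs_sub (f s) (g s), abs_le_supAbsOn g hs]

end SupAbsOn

section CoPE

lemma setOf_abs_lt_subset_copeMinus_diff_copePlus {α : Type*} (f σ : α → ℝ) (c τ a : ℝ) :
    {s | |(f s - c) / (τ * σ s)| < a} ⊆ copeMinus f σ c τ a \ copePlus f σ c τ a :=
  fun s (hs : |(f s - c) / (τ * σ s)| < a) =>
    ⟨(abs_lt.mp hs).1.le, (abs_lt.mp hs).2.not_ge⟩

variable {α : Type*} [TopologicalSpace α]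

lemma closure_copeMinus_diff_copePlus_subset {f σ : α → ℝ} (hf : Continuous f)
    (hσ : Continuous σ) {c τ : ℝ} (hτσ : ∀ s, τ * σ s ≠ 0) (a : ℝ) :
    closure (copeMinus f σ c τ a \ copePlus f σ c τ a) ⊆ {s | |(f s - c) / (τ * σ s)| ≤ a} :=
  closure_minimal (fun s hs => show |(f s - c) / (τ * σ s)| ≤ a from
      abs_le.mpr ⟨hs.1, (not_le.mp hs.2).le⟩)
    (isClosed_le ((hf.sub continuous_const).div (continuous_const.mul hσ) hτσ).abs
      continuous_const)

lemma continuous_stdField [LocallyCompactSpace α] (μ σ : C(α, ℝ)) (τ : ℝ) (hσ : ∀ s, σ s ≠ 0)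
    (hτ : τ ≠ 0) :
    Continuous fun f => stdField f μ σ τ hσ hτ := by
  let w : C(α, ℝ) := ⟨fun s => (τ * σ s)⁻¹,
    (continuous_const.mul (map_continuous σ)).inv₀ fun s => mul_ne_zero hτ (hσ s)⟩
  have hw : (fun f => stdField f μ σ τ hσ hτ) = fun f => (f - μ) * w := by
    funext f; ext s; exact div_eq_mul_inv _ _
  rw [hw]
  exact (continuous_id.sub continuous_const).mul continuous_const

variable {f μ σ : C(α, ℝ)} {c τ a : ℝ} {hσ : ∀ s, σ s ≠ 0} {hτ : τ ≠ 0} {B : Set α}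

lemma supAbsOn_stdField_le_of_subset_closure (hB : ∀ s ∈ B, μ s = c) (ha : 0 ≤ a)
    (h : B ⊆ closure (copeMinus f σ c τ a \ copePlus f σ c τ a)) :
    supAbsOn (stdField f μ σ τ hσ hτ) B ≤ a :=
  supAbsOn_le_s1 ha fun s hs => by
    have hs' := closure_copeMinus_diff_copePlus_subset (map_continuous f) (map_continuous σ)
      (fun s => mul_ne_zero hτ (hσ s)) a (h hs)
    rwa [← hB s hs] at hs'

lemma subset_closure_of_supAbsOn_stdField_lt [CompactSpace α] (hB : ∀ s ∈ B, μ s = c)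
    (h : supAbsOn (stdField f μ σ τ hσ hτ) B < a) :
    B ⊆ closure (copeMinus f σ c τ a \ copePlus f σ c τ a) := fun s hs =>
  subset_closure <| setOf_abs_lt_subset_copeMinus_diff_copePlus f σ c τ a <| by
    rw [Set.mem_ofPred_eq, ← hB s hs]
    exact (abs_le_supAbsOn _ hs).trans_lt h

end CoPE

section Distribution

variable {ι Ω Ω' E : Type*} [MeasurableSpace Ω] [MeasurableSpace Ω'] {P : Measure Ω}
  [IsProbabilityMeasure P] {P' : Measure Ω'} [IsProbabilityMeasure P'] {l : Filter ι}

lemma tendstoInDistribution_of_forall_integral_tendsto [TopologicalSpace E] [MeasurableSpace E]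
    [OpensMeasurableSpace E] {X : ι → Ω → E} {Z : Ω' → E} (hX : ∀ i, AEMeasurable (X i) P)
    (hZ : AEMeasurable Z P')
    (h : ∀ φ : E →ᵇ ℝ, Tendsto (fun i => ∫ ω, φ (X i ω) ∂P) l (𝓝 (∫ ω, φ (Z ω) ∂P'))) :
    TendstoInDistribution X l Z (fun _ => P) P' where
  forall_aemeasurable := hX
  aemeasurable_limit := hZ
  tendsto := by
    refine ProbabilityMeasure.tendsto_iff_forall_integral_tendsto.2 fun φ => ?_
    simp only [ProbabilityMeasure.coe_mk]
    rw [integral_map hZ φ.continuous.aestronglyMeasurable]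
    simpa only [fun i => integral_map (hX i) φ.continuous.aestronglyMeasurable] using h φ

lemma measure_singleton_eq_zero_of_continuousAt_cdf (ν : Measure ℝ) [IsProbabilityMeasure ν]
    {a : ℝ} (h : ContinuousAt (fun x => (ν (Set.Iic x)).toReal) a) : ν {a} = 0 := by
  have hcdf : ContinuousAt (cdf ν) a := by
    convert h using 2 with x; exact cdf_eq_real ν x
  rw [← measure_cdf ν, StieltjesFunction.measure_singleton,
    hcdf.continuousWithinAt.leftLim_eq, sub_self, ENNReal.ofReal_zero]

lemma measure_preimage_singleton_eq_zero_of_continuousAt {Z : Ω' → ℝ} (hZ : AEMeasurable Z P')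
    {a : ℝ} (h : ContinuousAt (fun x => (P' {ω | Z ω ≤ x}).toReal) a) : P' (Z ⁻¹' {a}) = 0 := by
  have := Measure.isProbabilityMeasure_map hZ
  rw [← Measure.map_apply_of_aemeasurable hZ (measurableSet_singleton a)]
  refine measure_singleton_eq_zero_of_continuousAt_cdf _ ?_
  convert h using 3 with x
  exact Measure.map_apply_of_aemeasurable hZ measurableSet_Iic

namespace MeasureTheory.TendstoInDistribution

lemma tendsto_measure_preimage [TopologicalSpace E] [MeasurableSpace E] [OpensMeasurableSpace E]
    [HasOuterApproxClosed E] {X : ι → Ω → E} {Z : Ω' → E}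
    (h : TendstoInDistribution X l Z (fun _ => P) P') {A : Set E} (hA : MeasurableSet A)
    (hA' : P' (Z ⁻¹' frontier A) = 0) :
    Tendsto (fun i => P (X i ⁻¹' A)) l (𝓝 (P' (Z ⁻¹' A))) := by
  have hfr : MeasurableSet (frontier A) := isClosed_frontier.measurableSet
  have key := ProbabilityMeasure.tendsto_measure_of_null_frontier_of_tendsto' h.tendsto (E := A)
    (by rwa [ProbabilityMeasure.coe_mk, Measure.map_apply_of_aemeasurable h.aemeasurable_limit hfr])
  simpa only [ProbabilityMeasure.coe_mk, Measure.map_apply_of_aemeasurable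
    (h.forall_aemeasurable _) hA, Measure.map_apply_of_aemeasurable h.aemeasurable_limit hA]
    using key

lemma tendsto_measure_of_preimage_Iio_subset_of_subset_preimage_Iic
    {X : ι → Ω → ℝ} {Z : Ω' → ℝ} (h : TendstoInDistribution X l Z (fun _ => P) P') {a : ℝ}
    (hcdf : ContinuousAt (fun x => (P' {ω | Z ω ≤ x}).toReal) a) {E : ι → Set Ω}
    (hlow : ∀ i, X i ⁻¹' Set.Iio a ⊆ E i) (hup : ∀ i, E i ⊆ X i ⁻¹' Set.Iic a) :
    Tendsto (fun i => P (E i)) l (𝓝 (P' {ω | Z ω ≤ a})) := by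
  have hatom := measure_preimage_singleton_eq_zero_of_continuousAt h.aemeasurable_limit hcdf
  have hIic := h.tendsto_measure_preimage measurableSet_Iic (by rwa [frontier_Iic])
  have hIio := h.tendsto_measure_preimage measurableSet_Iio (by rwa [frontier_Iio])
  have hIio_eq : P' (Z ⁻¹' Set.Iio a) = P' (Z ⁻¹' Set.Iic a) := by
    rw [← Set.Iic_sdiff_right, Set.preimage_sdiff, measure_sdiff_null hatom]
  rw [hIio_eq] at hIio
  exact tendsto_of_tendsto_of_tendsto_of_le_of_le hIio hIic (fun i => measure_mono (hlow i))
    (fun i => measure_mono (hup i))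

end MeasureTheory.TendstoInDistribution

end Distribution

theorem cope_contour_coverage_general
    {N : ℕ} (S : Set (EuclideanSpace ℝ (Fin N))) (hS : IsCompact S)
    (μ σ : C(S, ℝ)) (c : ℝ)
    (hlevel : {s : S | μ s = c} = frontier (excursionSet (⇑μ) c))
    (hσ : ∀ s, 0 < σ s)
    {Ω : Type*} [MeasurableSpace Ω] (P : Measure Ω) [IsProbabilityMeasure P]
    {Ω' : Type*} [MeasurableSpace Ω'] (P' : Measure Ω') [IsProbabilityMeasure P']
    (μhat : ℕ → Ω → C(S, ℝ)) (hmeas : ∀ n, Measurable (μhat n))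
    (τ : ℕ → ℝ) (hτ : ∀ n, 0 < τ n)
    (G : Ω' → C(S, ℝ)) (hGmeas : Measurable G)
    (hconv : ∀ φ : C(S, ℝ) →ᵇ ℝ,
      Tendsto
        (fun n => ∫ ω, φ (stdField (μhat n ω) μ σ (τ n) (fun s => (hσ s).ne') (hτ n).ne') ∂P)
        atTop (𝓝 (∫ ω, φ (G ω) ∂P')))
    (hcdf : Continuous fun a : ℝ =>
      (P' {ω | supAbsOn (⇑(G ω)) (frontier (excursionSet (⇑μ) c)) ≤ a}).toReal) :
    ∀ a : ℝ, 0 < a →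
      Tendsto
        (fun n =>
          (P {ω | frontier (excursionSet (⇑μ) c) ⊆
              closure (copeMinus (⇑(μhat n ω)) (⇑σ) c (τ n) a \
                copePlus (⇑(μhat n ω)) (⇑σ) c (τ n) a)}).toReal)
        atTop
        (𝓝 ((P' {ω | supAbsOn (⇑(G ω)) (frontier (excursionSet (⇑μ) c)) ≤ a}).toReal)) := by
  intro a ha
  have : CompactSpace S := isCompact_iff_compactSpace.mp hS
  have : BorelSpace C(S, ℝ) := ⟨rfl⟩
  set B := frontier (excursionSet (⇑μ) c)
  have hB : ∀ s ∈ B, μ s = c := fun s hs => (hlevel ▸ hs : s ∈ {s : S | μ s = c})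
  have hstd := tendstoInDistribution_of_forall_integral_tendsto
    (X := fun n ω => stdField (μhat n ω) μ σ (τ n) (fun s => (hσ s).ne') (hτ n).ne')
    (fun n => ((continuous_stdField μ σ (τ n) (fun s => (hσ s).ne') (hτ n).ne').measurable.comp
      (hmeas n)).aemeasurable)
    hGmeas.aemeasurable hconv
  have hsup := hstd.continuous_comp (lipschitzWith_supAbsOn B).continuous
  refine (ENNReal.tendsto_toReal (measure_ne_top _ _)).comp <|
    hsup.tendsto_measure_of_preimage_Iio_subset_of_subset_preimage_Iic hcdf.continuousAt
      (fun _ _ hω => subset_closure_of_supAbsOn_stdField_lt hB hω)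
      (fun _ _ hω => supAbsOn_stdField_le_of_subset_closure hB ha.le hω)

/-- **Corollary (confidence sets for the contour).** -/
theorem cope_contour_coverage
    {N : ℕ} (hN : 1 ≤ N) (S : Set (EuclideanSpace ℝ (Fin N))) (hS : IsCompact S)
    (μ σ : C(S, ℝ)) (c : ℝ)
    (hlevel : {s : S | μ s = c} = frontier (excursionSet (⇑μ) c))
    (hne : (frontier (excursionSet (⇑μ) c)).Nonempty)
    (hσ : ∀ s, 0 < σ s)
    {Ω : Type*} [MeasurableSpace Ω] (P : Measure Ω) [IsProbabilityMeasure P]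
    {Ω' : Type*} [MeasurableSpace Ω'] (P' : Measure Ω') [IsProbabilityMeasure P']
    (μhat : ℕ → Ω → C(S, ℝ)) (hmeas : ∀ n, Measurable (μhat n))
    (τ : ℕ → ℝ) (hτ : ∀ n, 0 < τ n) (hτ0 : Tendsto τ atTop (𝓝 0))
    (G : Ω' → C(S, ℝ)) (hGmeas : Measurable G)
    (hG : IsCenteredGaussianField P' G)
    (hGvar : ∀ s : S, ∫ ω, (G ω s) ^ 2 ∂P' = 1)
    (hconv : ∀ φ : C(S, ℝ) →ᵇ ℝ,
      Tendsto
        (fun n => ∫ ω, φ (stdField (μhat n ω) μ σ (τ n) (fun s => (hσ s).ne') (hτ n).ne') ∂P)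
        atTop (𝓝 (∫ ω, φ (G ω) ∂P')))
    (hcdf : Continuous fun a : ℝ =>
      (P' {ω | supAbsOn (⇑(G ω)) (frontier (excursionSet (⇑μ) c)) ≤ a}).toReal) :
    ∀ a : ℝ, 0 < a →
      Tendsto
        (fun n =>
          (P {ω | frontier (excursionSet (⇑μ) c) ⊆
              closure (copeMinus (⇑(μhat n ω)) (⇑σ) c (τ n) a \
                copePlus (⇑(μhat n ω)) (⇑σ) c (τ n) a)}).toReal)
        atTop
        (𝓝 ((P' {ω | supAbsOn (⇑(G ω)) (frontier (excursionSet (⇑μ) c)) ≤ a}).toReal)) :=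
  cope_contour_coverage_general S hS μ σ c hlevel hσ P P' μhat hmeas τ hτ G hGmeas hconv hcdf

end
end

section
/- Suppose μ : S → ℝ and σ : S → ℝ are continuous, σ is strictly positive, c ∈ ℝ, the level set {s ∈ S : μ(s) = c} equals ∂A_c, and ∂A_c is nonempty. Then for every sequence (η_n) of positive real numbers with η_n → 0, the Hausdorff distance between the inflated boundary A_c^{η_n} and ∂A_c converges to 0 as n → ∞. -/
/-!
With `g = |μ - c| / σ`, the inflated boundary `A_c^η` is the sublevel set `{g ≤ η}` and, by the
level-set hypothesis, `∂A_c = {g ≤ 0}`. On a compact space a continuous `g` is bounded away from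
`0` off any open neighbourhood of `{g ≤ 0}`, so for small `η` the set `{g ≤ η}` lies in the
`ε`-thickening of `{g ≤ 0}`; since it also contains `{g ≤ 0}`, the Hausdorff distance is at most `ε`.
-/

open Filter Topology

noncomputable section

/-- The inflated boundary `A_c^η = {s : c - η σ(s) ≤ μ(s) ≤ c + η σ(s)}`. -/
def inflatedBoundary {α : Type*} (μ σ : α → ℝ) (c η : ℝ) : Set α :=
  {s | c - η * σ s ≤ μ s ∧ μ s ≤ c + η * σ s}

theorem eventually_setOf_le_subset_of_isOpen {X : Type*} [TopologicalSpace X] [CompactSpace X]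
    {g : X → ℝ} (hg : Continuous g) {a : ℝ} {U : Set X} (hU : IsOpen U)
    (haU : {x | g x ≤ a} ⊆ U) : ∀ᶠ t in 𝓝 a, {x | g x ≤ t} ⊆ U := by
  have hgt : ∀ x ∈ Uᶜ, a < g x := fun x hx => not_le.mp fun hxa => hx (haU hxa)
  obtain ⟨m, ham, hm⟩ := hU.isClosed_compl.isCompact.exists_forall_le' hg.continuousOn hgt
  filter_upwards [eventually_lt_nhds ham] with t htm x hxt
  by_contra hxU
  exact (hm x hxU).not_gt (hxt.trans_lt htm)

theorem Metric.hausdorffDist_le_of_subset_thickening {X : Type*} [PseudoMetricSpace X]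
    {s t : Set X} {ε : ℝ} (hε : 0 ≤ ε) (hts : t ⊆ s) (hst : s ⊆ thickening ε t) :
    hausdorffDist s t ≤ ε := by
  refine hausdorffDist_le_of_mem_dist hε (fun x hx => ?_) fun y hy => ⟨y, hts hy, by simpa⟩
  obtain ⟨y, hy, hxy⟩ := mem_thickening_iff.mp (hst hx)
  exact ⟨y, hy, hxy.le⟩

theorem tendsto_hausdorffDist_setOf_le {X : Type*} [PseudoMetricSpace X] [CompactSpace X]
    {g : X → ℝ} (hg : Continuous g) (a : ℝ) :
    Tendsto (fun t => Metric.hausdorffDist {x | g x ≤ t} {x | g x ≤ a}) (𝓝[≥] a) (𝓝 0) := by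
  refine Metric.tendsto_nhds.mpr fun ε hε => ?_
  have hsub := eventually_setOf_le_subset_of_isOpen hg Metric.isOpen_thickening
    (Metric.self_subset_thickening (half_pos hε) {x | g x ≤ a})
  filter_upwards [self_mem_nhdsWithin, nhdsWithin_le_nhds hsub] with t hat hst
  have hts : {x | g x ≤ a} ⊆ {x | g x ≤ t} := fun x (hx : g x ≤ a) => hx.trans hat
  rw [Real.dist_0_eq_abs, abs_of_nonneg Metric.hausdorffDist_nonneg]
  exact (Metric.hausdorffDist_le_of_subset_thickening (half_pos hε).le hts hst).trans_lt
    (half_lt_self hε)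

theorem inflatedBoundary_eq_setOf_abs_div_le {α : Type*} {μ σ : α → ℝ} (hσ : ∀ s, 0 < σ s)
    (c η : ℝ) : inflatedBoundary μ σ c η = {s | |μ s - c| / σ s ≤ η} := by
  ext s
  simp only [inflatedBoundary, Set.mem_ofPred_eq, div_le_iff₀ (hσ s), abs_sub_le_iff]
  constructor <;> intro h <;> constructor <;> linarith [h.1, h.2]

theorem inflatedBoundary_zero {α : Type*} (μ σ : α → ℝ) (c : ℝ) :
    inflatedBoundary μ σ c 0 = {s | μ s = c} := by
  ext s
  simp [inflatedBoundary, le_antisymm_iff, and_comm]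

theorem hausdorffDist_inflatedBoundary_tendsto_zero_general
    {N : ℕ} (S : Set (EuclideanSpace ℝ (Fin N))) (hS : IsCompact S)
    (μ σ : S → ℝ) (hμ : Continuous μ) (hσc : Continuous σ) (hσ : ∀ s, 0 < σ s) (c : ℝ)
    (hlevel : {s : S | μ s = c} = frontier (excursionSet μ c))
    (η : ℕ → ℝ) (hη : ∀ n, 0 < η n) (hη0 : Tendsto η atTop (𝓝 0)) :
    Tendsto
      (fun n => Metric.hausdorffDist (inflatedBoundary μ σ c (η n)) (frontier (excursionSet μ c)))
      atTop (𝓝 0) := by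
  have : CompactSpace S := isCompact_iff_compactSpace.mp hS
  have hg : Continuous fun s => |μ s - c| / σ s :=
    (hμ.sub continuous_const).abs.div hσc fun s => (hσ s).ne'
  have hηpos : Tendsto η atTop (𝓝[≥] 0) :=
    tendsto_nhdsWithin_iff.mpr ⟨hη0, .of_forall fun n => (hη n).le⟩
  rw [← hlevel, ← inflatedBoundary_zero μ σ c]
  simp only [inflatedBoundary_eq_setOf_abs_div_le hσ]
  exact (tendsto_hausdorffDist_setOf_le hg 0).comp hηpos

/-- **Lemma 1.** The Hausdorff distance between the inflated boundary `A_c^{η_n}` and the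
boundary `∂A_c` tends to zero whenever `η_n → 0`. -/
theorem hausdorffDist_inflatedBoundary_tendsto_zero
    {N : ℕ} (hN : 1 ≤ N) (S : Set (EuclideanSpace ℝ (Fin N))) (hS : IsCompact S)
    (μ σ : S → ℝ) (hμ : Continuous μ) (hσc : Continuous σ) (hσ : ∀ s, 0 < σ s) (c : ℝ)
    (hlevel : {s : S | μ s = c} = frontier (excursionSet μ c))
    (hne : (frontier (excursionSet μ c)).Nonempty)
    (η : ℕ → ℝ) (hη : ∀ n, 0 < η n) (hη0 : Tendsto η atTop (𝓝 0)) :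
    Tendsto
      (fun n => Metric.hausdorffDist (inflatedBoundary μ σ c (η n)) (frontier (excursionSet μ c)))
      atTop (𝓝 0) :=
  hausdorffDist_inflatedBoundary_tendsto_zero_general S hS μ σ hμ hσc hσ c hlevel η hη hη0

end
end

section
/- Let S be any set, let μ, μ̂, σ : S → ℝ with σ(s) > 0 for all s, let c ∈ ℝ, τ > 0, η > 0 and a ≥ 0. If |μ̂(s) − μ(s)| < a τ σ(s) for every s ∈ A_c^η, and |μ̂(s) − μ(s)| < a τ σ(s) + η σ(s) for every s ∈ S \ A_c^η, then the inclusions Â_c^+ ⊆ A_c ⊆ Â_c^− hold. -/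
noncomputable section

/-!
At a point where `μ < c`, either the point lies in the inflated boundary, where the error is below
`a τ σ`, or `μ < c - η σ`, and then the distance to `c` absorbs the extra slack `η σ` allowed off
the boundary. Either way `μ̂ < c + a τ σ`, so the point is not in `Â_c^+`. Symmetrically,
`μ ≥ c` forces `μ̂ > c - a τ σ`, i.e. membership in `Â_c^-`.
-/

section ErrorBounds

variable {m mhat c w b : ℝ}

theorem lt_add_of_lt_of_error_bounds (hw : 0 ≤ w)
    (hclose : c - w ≤ m ∧ m ≤ c + w → |mhat - m| < b)
    (hfar : ¬(c - w ≤ m ∧ m ≤ c + w) → |mhat - m| < b + w) (hm : m < c) :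
    mhat < c + b := by
  by_cases hnear : c - w ≤ m
  · have := (abs_lt.mp (hclose ⟨hnear, hm.le.trans (le_add_of_nonneg_right hw)⟩)).2
    linarith
  · have := (abs_lt.mp (hfar fun h => hnear h.1)).2
    linarith

theorem sub_lt_of_le_of_error_bounds (hw : 0 ≤ w)
    (hclose : c - w ≤ m ∧ m ≤ c + w → |mhat - m| < b)
    (hfar : ¬(c - w ≤ m ∧ m ≤ c + w) → |mhat - m| < b + w) (hm : c ≤ m) :
    c - b < mhat := by
  by_cases hnear : m ≤ c + w
  · have := (abs_lt.mp (hclose ⟨(sub_le_self c hw).trans hm, hnear⟩)).1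
    linarith
  · have := (abs_lt.mp (hfar fun h => hnear h.2)).1
    linarith

end ErrorBounds

section CopeSets

variable {S : Type*} {μhat σ : S → ℝ} {c τ a : ℝ} {s : S}

theorem mem_copePlus_iff (hτσ : 0 < τ * σ s) :
    s ∈ copePlus μhat σ c τ a ↔ c + a * τ * σ s ≤ μhat s := by
  rw [copePlus, Set.mem_ofPred_eq, le_div_iff₀ hτσ]
  constructor <;> intro h <;> linarith

theorem mem_copeMinus_iff (hτσ : 0 < τ * σ s) :
    s ∈ copeMinus μhat σ c τ a ↔ c - a * τ * σ s ≤ μhat s := by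
  rw [copeMinus, Set.mem_ofPred_eq, le_div_iff₀ hτσ]
  constructor <;> intro h <;> linarith

end CopeSets

theorem cope_inclusion_of_pointwise_bounds_general
    {S : Type*} (μ μhat σ : S → ℝ) (hσ : ∀ s, 0 < σ s)
    (c τ η a : ℝ) (hτ : 0 < τ) (hη : 0 < η)
    (hclose : ∀ s ∈ inflatedBoundary μ σ c η, |μhat s - μ s| < a * τ * σ s)
    (hfar : ∀ s ∈ (Set.univ : Set S) \ inflatedBoundary μ σ c η,
      |μhat s - μ s| < a * τ * σ s + η * σ s) :
    copePlus μhat σ c τ a ⊆ excursionSet μ c ∧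
      excursionSet μ c ⊆ copeMinus μhat σ c τ a := by
  have hw : ∀ s, 0 ≤ η * σ s := fun s => (mul_pos hη (hσ s)).le
  have hoff : ∀ s, s ∉ inflatedBoundary μ σ c η → |μhat s - μ s| < a * τ * σ s + η * σ s :=
    fun s hs => hfar s ⟨Set.mem_univ s, hs⟩
  constructor
  · intro s hs
    by_contra hμ
    have hlt := lt_add_of_lt_of_error_bounds (hw s) (hclose s) (hoff s) (not_le.mp hμ)
    have hle := (mem_copePlus_iff (mul_pos hτ (hσ s))).mp hs
    linarith
  · intro s hs
    exact (mem_copeMinus_iff (mul_pos hτ (hσ s))).mpr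
      (sub_lt_of_le_of_error_bounds (hw s) (hclose s) (hoff s) hs).le

/-- If the estimation error is small on the inflated boundary `A_c^η` and moderately small off
it, then the CoPE sets bracket the excursion set: `Â_c^+ ⊆ A_c ⊆ Â_c^-`. -/
theorem cope_inclusion_of_pointwise_bounds
    {S : Type*} (μ μhat σ : S → ℝ) (hσ : ∀ s, 0 < σ s)
    (c τ η a : ℝ) (hτ : 0 < τ) (hη : 0 < η) (ha : 0 ≤ a)
    (hclose : ∀ s ∈ inflatedBoundary μ σ c η, |μhat s - μ s| < a * τ * σ s)
    (hfar : ∀ s ∈ (Set.univ : Set S) \ inflatedBoundary μ σ c η,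
      |μhat s - μ s| < a * τ * σ s + η * σ s) :
    copePlus μhat σ c τ a ⊆ excursionSet μ c ∧
      excursionSet μ c ⊆ copeMinus μhat σ c τ a :=
  cope_inclusion_of_pointwise_bounds_general μ μhat σ hσ c τ η a hτ hη hclose hfar

end
end

section
/- Suppose μ, μ̂, σ : S → ℝ are continuous, σ is strictly positive, c ∈ ℝ, τ > 0 and a ≥ 0. If the inclusions Â_c^+ ⊆ A_c ⊆ Â_c^− hold, then |μ̂(s) − c| ≤ a τ σ(s) for every s ∈ ∂A_c, i.e. sup_{s ∈ ∂A_c} |(μ̂(s) − c)/(τ σ(s))| ≤ a. -/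
noncomputable section

/-! A boundary point of the closed set `A_c` lies in `A_c ⊆ Â_c^-`, which gives the lower bound
`-a`. It is not an interior point of `A_c`, while the open set `{g > a}` lies in `Â_c^+ ⊆ A_c`
and hence in the interior; this gives the upper bound `a`. -/

theorem isClosed_excursionSet {X : Type*} [TopologicalSpace X] {μ : X → ℝ} (hμ : Continuous μ)
    (c : ℝ) : IsClosed (excursionSet μ c) :=
  isClosed_le continuous_const hμ

theorem abs_le_of_mem_frontier {X : Type*} [TopologicalSpace X] {A : Set X} {g : X → ℝ} {a : ℝ}
    (hA : IsClosed A) (hg : Continuous g) (hupper : {x | a ≤ g x} ⊆ A)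
    (hlower : A ⊆ {x | -a ≤ g x}) {x : X} (hx : x ∈ frontier A) : |g x| ≤ a := by
  have hxA : x ∈ A := hA.frontier_subset hx
  have hx_not_int : x ∉ interior A := hx.2
  have hgt_subset_int : {y | a < g y} ⊆ interior A :=
    interior_maximal (fun y (hy : a < g y) => hupper hy.le) (isOpen_lt continuous_const hg)
  exact abs_le.2 ⟨hlower hxA, not_lt.1 fun hgt => hx_not_int (hgt_subset_int hgt)⟩

theorem supAbsOn_le_s5 {α : Type*} {f : α → ℝ} {B : Set α} {a : ℝ} (ha : 0 ≤ a)
    (hf : ∀ x ∈ B, |f x| ≤ a) : supAbsOn f B ≤ a :=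
  Real.sSup_le (Set.forall_mem_image.2 hf) ha

theorem abs_le_mul_of_abs_div_le {x y a : ℝ} (hy : 0 < y) (h : |x / y| ≤ a) : |x| ≤ a * y := by
  rwa [abs_div, abs_of_pos hy, div_le_iff₀ hy] at h

theorem boundary_bound_of_cope_inclusion_general
    {N : ℕ} (S : Set (EuclideanSpace ℝ (Fin N)))
    (μ μhat σ : S → ℝ) (hμ : Continuous μ) (hμhat : Continuous μhat) (hσc : Continuous σ)
    (hσ : ∀ s, 0 < σ s) (c τ a : ℝ) (hτ : 0 < τ) (ha : 0 ≤ a)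
    (hincl : copePlus μhat σ c τ a ⊆ excursionSet μ c ∧
      excursionSet μ c ⊆ copeMinus μhat σ c τ a) :
    (∀ s ∈ frontier (excursionSet μ c), |μhat s - c| ≤ a * (τ * σ s)) ∧
      supAbsOn (fun s => (μhat s - c) / (τ * σ s)) (frontier (excursionSet μ c)) ≤ a := by
  have hscale : ∀ s, 0 < τ * σ s := fun s => mul_pos hτ (hσ s)
  have hcont : Continuous fun s => (μhat s - c) / (τ * σ s) :=
    (hμhat.sub continuous_const).div (continuous_const.mul hσc) fun s => (hscale s).ne'
  have hbound : ∀ s ∈ frontier (excursionSet μ c), |(μhat s - c) / (τ * σ s)| ≤ a :=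
    fun s => abs_le_of_mem_frontier (isClosed_excursionSet hμ c) hcont hincl.1 hincl.2
  exact ⟨fun s hs => abs_le_mul_of_abs_div_le (hscale s) (hbound s hs), supAbsOn_le_s5 ha hbound⟩

/-- If the CoPE inclusions `Â_c^+ ⊆ A_c ⊆ Â_c^-` hold, then on the boundary `∂A_c` one has
`|μ̂(s) - c| ≤ a τ σ(s)`, i.e. `sup_{∂A_c} |(μ̂ - c)/(τσ)| ≤ a`. -/
theorem boundary_bound_of_cope_inclusion
    {N : ℕ} (hN : 1 ≤ N) (S : Set (EuclideanSpace ℝ (Fin N))) (hS : IsCompact S)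
    (μ μhat σ : S → ℝ) (hμ : Continuous μ) (hμhat : Continuous μhat) (hσc : Continuous σ)
    (hσ : ∀ s, 0 < σ s) (c τ a : ℝ) (hτ : 0 < τ) (ha : 0 ≤ a)
    (hincl : copePlus μhat σ c τ a ⊆ excursionSet μ c ∧
      excursionSet μ c ⊆ copeMinus μhat σ c τ a) :
    (∀ s ∈ frontier (excursionSet μ c), |μhat s - c| ≤ a * (τ * σ s)) ∧
      supAbsOn (fun s => (μhat s - c) / (τ * σ s)) (frontier (excursionSet μ c)) ≤ a :=
  boundary_bound_of_cope_inclusion_general S μ μhat σ hμ hμhat hσc hσ c τ a hτ ha hincl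

end
end

section
/- Suppose μ, μ̂, σ : S → ℝ are continuous, σ is strictly positive, c ∈ ℝ, τ > 0 and a > 0. If the inclusions Â_c^+ ⊆ A_c ⊆ Â_c^− hold, then ∂A_c ⊆ cl(Â_c^− \ Â_c^+), where cl denotes the topological closure in S. -/
/-!
A boundary point of `A_c` outside the closed set `Â_c^+` is a limit of points of `A_c \ Â_c^+`.
A boundary point inside `Â_c^+` lies in the interior of `Â_c^-` (because `a > 0`), so it is a
limit of points of `Â_c^- \ A_c`, and these avoid `Â_c^+`.
-/

noncomputable section

theorem frontier_subset_closure_diff_of_subset {X : Type*} [TopologicalSpace X] {P A M : Set X}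
    (hP : IsClosed P) (hPA : P ⊆ A) (hAM : A ⊆ M) (hPM : P ⊆ interior M) :
    frontier A ⊆ closure (M \ P) := by
  intro x hx
  rw [frontier_eq_closure_inter_closure] at hx
  by_cases hxP : x ∈ P
  · have hsub : interior M ∩ Aᶜ ⊆ M \ P := fun y hy =>
      ⟨interior_subset hy.1, fun hyP => hy.2 (hPA hyP)⟩
    exact closure_mono hsub (isOpen_interior.inter_closure ⟨hPM hxP, hx.2⟩)
  · have hsub : Pᶜ ∩ A ⊆ M \ P := fun y hy => ⟨hAM hy.2, hy.1⟩
    exact closure_mono hsub (hP.isOpen_compl.inter_closure ⟨hxP, hx.1⟩)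

theorem setOf_le_subset_interior_setOf_le {X : Type*} [TopologicalSpace X] {f : X → ℝ}
    (hf : Continuous f) {a b : ℝ} (hba : b < a) :
    {x | a ≤ f x} ⊆ interior {x | b ≤ f x} := fun _ hx =>
  interior_maximal (Set.ofPred_subset_ofPred.mpr fun _ => le_of_lt) (isOpen_lt continuous_const hf)
    (hba.trans_le hx)

theorem frontier_subset_closure_of_cope_inclusion_general
    {N : ℕ} (S : Set (EuclideanSpace ℝ (Fin N)))
    (μ μhat σ : S → ℝ) (hμhat : Continuous μhat) (hσc : Continuous σ)
    (hσ : ∀ s, 0 < σ s) (c τ a : ℝ) (hτ : 0 < τ) (ha : 0 < a)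
    (hincl : copePlus μhat σ c τ a ⊆ excursionSet μ c ∧
      excursionSet μ c ⊆ copeMinus μhat σ c τ a) :
    frontier (excursionSet μ c) ⊆
      closure (copeMinus μhat σ c τ a \ copePlus μhat σ c τ a) := by
  have hT : Continuous fun s => (μhat s - c) / (τ * σ s) :=
    (hμhat.sub continuous_const).div (continuous_const.mul hσc) fun s => (mul_pos hτ (hσ s)).ne'
  exact frontier_subset_closure_diff_of_subset (isClosed_le continuous_const hT) hincl.1 hincl.2
    (setOf_le_subset_interior_setOf_le hT (neg_lt_self ha))

/-- If the CoPE inclusions `Â_c^+ ⊆ A_c ⊆ Â_c^-` hold, then the boundary `∂A_c` is contained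
in the closure of `Â_c^- \ Â_c^+`. -/
theorem frontier_subset_closure_of_cope_inclusion
    {N : ℕ} (hN : 1 ≤ N) (S : Set (EuclideanSpace ℝ (Fin N))) (hS : IsCompact S)
    (μ μhat σ : S → ℝ) (hμ : Continuous μ) (hμhat : Continuous μhat) (hσc : Continuous σ)
    (hσ : ∀ s, 0 < σ s) (c τ a : ℝ) (hτ : 0 < τ) (ha : 0 < a)
    (hincl : copePlus μhat σ c τ a ⊆ excursionSet μ c ∧
      excursionSet μ c ⊆ copeMinus μhat σ c τ a) :
    frontier (excursionSet μ c) ⊆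
      closure (copeMinus μhat σ c τ a \ copePlus μhat σ c τ a) :=
  frontier_subset_closure_of_cope_inclusion_general S μ μhat σ hμhat hσc hσ c τ a hτ ha hincl

end
end
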